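/- If L* is a Hamiltonian cycle in the metric closure of a connected positively-weighted graph G̃ with d-weight at most α times the minimum Hamiltonian cycle d-weight, then replacing each edge of L* by a shortest path in G̃ yields a closed walk through all vertices of G̃ of weight at most α times the minimum weight of a closed walk through all vertices of G̃. -/

import Mathlib

open scoped Classical

/-- Cyclic weight of a closed tour given by the vertex list `l`:
the sum of `ρ` over consecutive pairs, including the pair closing the cycle. -/
def cycWeight {V : Type*} (ρ : V → V → ℝ) (l : List V) : ℝ :=
  ((l.zip (l.rotate 1)).map fun p => ρ p.1 p.2).sum

/-- The (cyclic) list of edges of a closed tour given by the vertex list `l`. -/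
def cycEdges {V : Type*} (l : List V) : List (Sym2 V) :=
  (l.zip (l.rotate 1)).map (Function.uncurry Sym2.mk)

/-- The list of endpoints of a list of matching pairs. -/
def matchVerts {V : Type*} (M : List (V × V)) : List V :=
  M.flatMap fun p => [p.1, p.2]

/-- `M` is a perfect matching on the vertex set `X`: a partition of `X` into pairs. -/
def IsPM {V : Type*} [DecidableEq V] (X : Finset V) (M : List (V × V)) : Prop :=
  (matchVerts M).Nodup ∧ (matchVerts M).toFinset = X

/-- The weight of a matching: the sum of weights of its pairs. -/
def mWeight {V : Type*} (ρ : V → V → ℝ) (M : List (V × V)) : ℝ :=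
  (M.map fun p => ρ p.1 p.2).sum

/-- Total edge weight of a graph. -/
noncomputable def gWeight {V : Type*} [Fintype V] (f : Sym2 V → ℝ) (T : SimpleGraph V) : ℝ :=
  ∑ e ∈ T.edgeSet.toFinset, f e

/-- The weight of a walk in the graph `G` with edge weights `f`
(edges are counted with multiplicity). -/
def walkWeight {V : Type*} (G : SimpleGraph V) (f : Sym2 V → ℝ) {u v : V} (p : G.Walk u v) : ℝ :=
  (p.edges.map f).sum

/-- Shortest-path distance between `i` and `j` (metric closure of `G`). -/
noncomputable def sdist {V : Type*} (G : SimpleGraph V) (f : Sym2 V → ℝ) (i j : V) : ℝ :=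
  sInf {x | ∃ p : G.Walk i j, x = walkWeight G f p}

/-! Shortest walks realise the metric closure `d = sdist G f`, so replacing every edge of `L*` by a
shortest walk gives a spanning closed walk whose weight is exactly the `d`-weight of `L*`.
Conversely, a spanning closed walk `q` from `u` can be shortcut to the Hamiltonian cycle that
visits `u` and then the remaining vertices in the order of `q`; by the triangle inequality for `d`
its `d`-weight is at most the weight of `q`. So the minimal Hamiltonian `d`-weight is at most
the minimal weight of a spanning closed walk, and the bound on `L*` transfers. -/

def pathWeight {V : Type*} (ρ : V → V → ℝ) : List V → ℝ
  | a :: b :: l => ρ a b + pathWeight ρ (b :: l)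
  | _ => 0

section pathWeight

variable {V : Type*} {ρ : V → V → ℝ}

lemma pathWeight_cons_cons (a b : V) (l : List V) :
    pathWeight ρ (a :: b :: l) = ρ a b + pathWeight ρ (b :: l) := rfl

lemma cycWeight_cons (a : V) (l : List V) :
    cycWeight ρ (a :: l) = pathWeight ρ (a :: (l ++ [a])) := by
  suffices h : ∀ b c, (((b :: l).zip (l ++ [c])).map fun p => ρ p.1 p.2).sum =
      pathWeight ρ (b :: (l ++ [c])) by
    simpa [cycWeight, List.rotate_cons_succ] using h a a
  induction l with
  | nil => simp [pathWeight]
  | cons d l ih => simp [pathWeight_cons_cons, ih]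

lemma cycWeight_nonneg (hρ : ∀ a b, 0 ≤ ρ a b) (l : List V) : 0 ≤ cycWeight ρ l :=
  List.sum_nonneg <| by simp only [List.mem_map]; rintro _ ⟨p, -, rfl⟩; exact hρ p.1 p.2

lemma pathWeight_cons_le (htri : ∀ a b c, ρ a c ≤ ρ a b + ρ b c) (a b : V) {l : List V}
    (hl : l ≠ []) : pathWeight ρ (a :: l) ≤ ρ a b + pathWeight ρ (b :: l) := by
  obtain ⟨c, l, rfl⟩ := List.exists_cons_of_ne_nil hl
  simp only [pathWeight_cons_cons]
  linarith [htri a b c]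

lemma pathWeight_le_of_sublist (htri : ∀ a b c, ρ a c ≤ ρ a b + ρ b c) {l₁ l₂ : List V}
    (h : l₁.Sublist l₂) (a b : V) :
    pathWeight ρ (a :: (l₁ ++ [b])) ≤ pathWeight ρ (a :: (l₂ ++ [b])) := by
  induction h generalizing a with
  | slnil => rfl
  | cons c _ ih =>
    exact (pathWeight_cons_le htri a c (by simp)).trans ((add_le_add_iff_left _).2 (ih c))
  | cons_cons c _ ih =>
    simpa only [List.cons_append, pathWeight_cons_cons, add_le_add_iff_left] using ih c

end pathWeight

section walkWeight

open SimpleGraph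

variable {V : Type*} {G : SimpleGraph V} {f : Sym2 V → ℝ}

lemma walkWeight_cons {u v w : V} (h : G.Adj u v) (p : G.Walk v w) :
    walkWeight G f (Walk.cons h p) = f s(u, v) + walkWeight G f p := by
  simp [walkWeight]

lemma walkWeight_append {u v w : V} (p : G.Walk u v) (q : G.Walk v w) :
    walkWeight G f (p.append q) = walkWeight G f p + walkWeight G f q := by
  simp [walkWeight, Walk.edges_append]

lemma walkWeight_nonneg (hf : ∀ e ∈ G.edgeSet, 0 ≤ f e) {u v : V} (p : G.Walk u v) :
    0 ≤ walkWeight G f p :=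
  List.sum_nonneg <| by
    simpa using fun e he => hf e (p.edges_subset_edgeSet he)

lemma walkWeight_bypass_le [DecidableEq V] (hf : ∀ e ∈ G.edgeSet, 0 ≤ f e) {u v : V}
    (p : G.Walk u v) : walkWeight G f p.bypass ≤ walkWeight G f p := by
  obtain ⟨l, hperm, hsub⟩ :=
    p.bypass_isPath.edges_nodup.subperm p.edges_bypass_subset_edges
  calc walkWeight G f p.bypass = (l.map f).sum := ((hperm.map f).sum_eq).symm
    _ ≤ (p.edges.map f).sum := (hsub.map f).sum_le_sum <| by
        simpa using fun e he => hf e (p.edges_subset_edgeSet he)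

lemma sdist_le_walkWeight (hf : ∀ e ∈ G.edgeSet, 0 ≤ f e) {u v : V} (p : G.Walk u v) :
    sdist G f u v ≤ walkWeight G f p :=
  csInf_le ⟨0, by rintro x ⟨q, rfl⟩; exact walkWeight_nonneg hf q⟩ ⟨p, rfl⟩

lemma le_sdist {u v : V} (h : G.Reachable u v) {c : ℝ}
    (hc : ∀ p : G.Walk u v, c ≤ walkWeight G f p) : c ≤ sdist G f u v :=
  le_csInf (h.elim fun p => ⟨_, p, rfl⟩) (by rintro x ⟨p, rfl⟩; exact hc p)

lemma sdist_nonneg (hf : ∀ e ∈ G.edgeSet, 0 ≤ f e) {u v : V} (h : G.Reachable u v) :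
    0 ≤ sdist G f u v :=
  le_sdist h (walkWeight_nonneg hf)

lemma sdist_self (hf : ∀ e ∈ G.edgeSet, 0 ≤ f e) (u : V) : sdist G f u u = 0 :=
  (sdist_le_walkWeight hf Walk.nil).antisymm (sdist_nonneg hf (Reachable.refl u))

lemma sdist_le_of_adj (hf : ∀ e ∈ G.edgeSet, 0 ≤ f e) {u v : V} (h : G.Adj u v) :
    sdist G f u v ≤ f s(u, v) := by
  simpa [walkWeight] using sdist_le_walkWeight hf (Walk.cons h Walk.nil)

/-- A lightest path among the finitely many paths is a shortest walk, since bypassing a walk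
does not increase its weight. -/
lemma exists_walkWeight_eq_sdist [Fintype V] [DecidableEq V]
    (hf : ∀ e ∈ G.edgeSet, 0 ≤ f e) {u v : V} (h : G.Reachable u v) :
    ∃ p : G.Walk u v, walkWeight G f p = sdist G f u v := by
  obtain ⟨q⟩ := h
  obtain ⟨p, -, hp⟩ := Finset.exists_min_image Finset.univ
    (fun p : G.Path u v => walkWeight G f p.1) ⟨⟨q.bypass, q.bypass_isPath⟩, Finset.mem_univ _⟩
  refine ⟨p.1, (le_sdist ⟨q⟩ fun r => ?_).antisymm (sdist_le_walkWeight hf _)⟩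
  exact (hp ⟨r.bypass, r.bypass_isPath⟩ (Finset.mem_univ _)).trans (walkWeight_bypass_le hf r)

lemma sdist_triangle [Fintype V] [DecidableEq V] (hconn : G.Connected)
    (hf : ∀ e ∈ G.edgeSet, 0 ≤ f e) (u v w : V) :
    sdist G f u w ≤ sdist G f u v + sdist G f v w := by
  obtain ⟨p, hp⟩ := exists_walkWeight_eq_sdist hf (hconn u v)
  obtain ⟨q, hq⟩ := exists_walkWeight_eq_sdist hf (hconn v w)
  simpa [walkWeight_append, hp, hq] using sdist_le_walkWeight hf (p.append q)

end walkWeight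

section tours

open SimpleGraph

variable {V : Type*} {G : SimpleGraph V} {f : Sym2 V → ℝ}

lemma pathWeight_support_le {ρ : V → V → ℝ} (hρ : ∀ u v, G.Adj u v → ρ u v ≤ f s(u, v))
    {u v : V} (p : G.Walk u v) (w : V) :
    pathWeight ρ (u :: (p.support.tail ++ [w])) ≤ walkWeight G f p + ρ v w := by
  induction p with
  | nil => simp [pathWeight, walkWeight]
  | @cons u x v h p ih =>
    rw [Walk.support_cons, List.tail_cons, ← p.cons_tail_support, List.cons_append,
      pathWeight_cons_cons, walkWeight_cons]
    linarith [hρ u x h]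

lemma exists_walk_walkWeight_eq_pathWeight [Fintype V] [DecidableEq V] (hconn : G.Connected)
    (hf : ∀ e ∈ G.edgeSet, 0 ≤ f e) (l : List V) (a b : V) :
    ∃ p : G.Walk a b, (∀ x ∈ a :: l, x ∈ p.support) ∧
      walkWeight G f p = pathWeight (sdist G f) (a :: (l ++ [b])) := by
  induction l generalizing a with
  | nil =>
    obtain ⟨p, hp⟩ := exists_walkWeight_eq_sdist hf (hconn a b)
    exact ⟨p, by simp, by simp [hp, pathWeight]⟩
  | cons c l ih =>
    obtain ⟨p, hp⟩ := exists_walkWeight_eq_sdist hf (hconn a c)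
    obtain ⟨q, hq_supp, hq⟩ := ih c
    refine ⟨p.append q, fun x hx => ?_, ?_⟩
    · rw [Walk.mem_support_append_iff]
      rcases List.mem_cons.mp hx with rfl | hx
      · exact Or.inl p.start_mem_support
      · exact Or.inr (hq_supp x hx)
    · rw [walkWeight_append, hp, hq, List.cons_append, pathWeight_cons_cons]

lemma exists_nodup_cycWeight_le [Fintype V] [DecidableEq V] (hconn : G.Connected)
    (hf : ∀ e ∈ G.edgeSet, 0 ≤ f e) {u : V} (q : G.Walk u u) :
    ∃ l : List V, l.Nodup ∧ l.toFinset = q.support.toFinset ∧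
      cycWeight (sdist G f) l ≤ walkWeight G f q := by
  set l := q.support.tail.dedup.erase u
  have hsub : l.Sublist q.support.tail := List.erase_sublist.trans (List.dedup_sublist _)
  refine ⟨u :: l, List.nodup_cons.2 ⟨(List.nodup_dedup _).not_mem_erase,
    (List.nodup_dedup _).erase u⟩, ?_, ?_⟩
  · ext x
    by_cases hx : x = u
    · simp [hx]
    · simp [l, hx, List.mem_erase_of_ne hx, Walk.mem_support_iff]
  · calc cycWeight (sdist G f) (u :: l)
        ≤ pathWeight (sdist G f) (u :: (q.support.tail ++ [u])) := by
          rw [cycWeight_cons]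
          exact pathWeight_le_of_sublist (sdist_triangle hconn hf) hsub u u
      _ ≤ walkWeight G f q + sdist G f u u :=
          pathWeight_support_le (fun _ _ => sdist_le_of_adj hf) q u
      _ = walkWeight G f q := by rw [sdist_self hf, add_zero]

lemma sInf_cycWeight_le_walkWeight [Fintype V] [DecidableEq V] (hconn : G.Connected)
    (hf : ∀ e ∈ G.edgeSet, 0 ≤ f e) {u : V} (q : G.Walk u u)
    (hq : q.support.toFinset = Finset.univ) :
    sInf {x | ∃ l : List V, l.Nodup ∧ l.toFinset = Finset.univ ∧
      x = cycWeight (sdist G f) l} ≤ walkWeight G f q := by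
  obtain ⟨l, hl, hl_span, hl_le⟩ := exists_nodup_cycWeight_le hconn hf q
  have hbdd : BddBelow {x | ∃ l : List V, l.Nodup ∧ l.toFinset = Finset.univ ∧
      x = cycWeight (sdist G f) l} :=
    ⟨0, by
      rintro _ ⟨l, -, -, rfl⟩
      exact cycWeight_nonneg (fun a b => sdist_nonneg hf (hconn a b)) l⟩
  exact (csInf_le hbdd ⟨l, hl, hl_span.trans hq, rfl⟩).trans hl_le

end tours

theorem approx_transfers_to_graph_general {V : Type*} [Fintype V] [DecidableEq V]
    (G : SimpleGraph V) (hconn : G.Connected)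
    (f : Sym2 V → ℝ) (hpos : ∀ e ∈ G.edgeSet, 0 < f e)
    (α : ℝ) (hα : 1 ≤ α)
    (Lstar : List V) (hLspan : Lstar.toFinset = Finset.univ)
    (hLw : cycWeight (fun a b => sdist G f a b) Lstar ≤
      α * sInf {x | ∃ l : List V, l.Nodup ∧ l.toFinset = Finset.univ ∧
        x = cycWeight (fun a b => sdist G f a b) l}) :
    ∃ (v : V) (p : G.Walk v v), p.support.toFinset = Finset.univ ∧
      walkWeight G f p ≤
        α * sInf {x | ∃ (u : V) (q : G.Walk u u),
          q.support.toFinset = Finset.univ ∧ x = walkWeight G f q} := by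
  have hf : ∀ e ∈ G.edgeSet, 0 ≤ f e := fun e he => (hpos e he).le
  have : Nonempty V := hconn.nonempty
  obtain ⟨a, t, rfl⟩ := List.exists_cons_of_ne_nil (l := Lstar) <| by
    rintro rfl
    exact Finset.univ_nonempty.ne_empty hLspan.symm
  obtain ⟨p, hp_supp, hp⟩ := exists_walk_walkWeight_eq_pathWeight hconn hf t a a
  have hp_span : p.support.toFinset = Finset.univ := Finset.eq_univ_of_forall fun x =>
    List.mem_toFinset.2 (hp_supp x (List.mem_toFinset.1 (hLspan ▸ Finset.mem_univ x)))
  refine ⟨a, p, hp_span, ?_⟩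
  rw [hp, ← cycWeight_cons]
  refine hLw.trans (mul_le_mul_of_nonneg_left (le_csInf ⟨_, a, p, hp_span, rfl⟩ ?_) (by linarith))
  rintro _ ⟨u, q, hq, rfl⟩
  exact sInf_cycWeight_le_walkWeight hconn hf q hq

/-- If `L*` is a Hamiltonian cycle in the metric closure of `G̃` whose
`d`-weight is at most `α` times the minimum Hamiltonian cycle `d`-weight, then
there is a closed walk through all vertices of `G̃` (obtained by replacing each
edge of `L*` by a shortest path) whose weight is at most `α` times the minimum
weight of a closed walk through all vertices of `G̃`. -/
theorem approx_transfers_to_graph {V : Type*} [Fintype V] [DecidableEq V]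
    (G : SimpleGraph V) (hconn : G.Connected) (hV : 3 ≤ Fintype.card V)
    (f : Sym2 V → ℝ) (hpos : ∀ e ∈ G.edgeSet, 0 < f e)
    (α : ℝ) (hα : 1 ≤ α)
    (Lstar : List V) (hLstar : Lstar.Nodup) (hLspan : Lstar.toFinset = Finset.univ)
    (hLw : cycWeight (fun a b => sdist G f a b) Lstar ≤
      α * sInf {x | ∃ l : List V, l.Nodup ∧ l.toFinset = Finset.univ ∧
        x = cycWeight (fun a b => sdist G f a b) l}) :
    ∃ (v : V) (p : G.Walk v v), p.support.toFinset = Finset.univ ∧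
      walkWeight G f p ≤
        α * sInf {x | ∃ (u : V) (q : G.Walk u u),
          q.support.toFinset = Finset.univ ∧ x = walkWeight G f q} :=
  approx_transfers_to_graph_general G hconn f hpos α hα Lstar hLspan hLw
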